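/- arXiv:1703.10133 — 2 statements merged into one kernel-verified Lean document; each statement's English description precedes it below -/
import Mathlib

section
/- Let n ≥ 1 and let H₀ be the matrix indexed by ℤ/(2n+1) with entries (H₀)_{ij} = δ_{ij} + (1/2)(δ_{i,j+1} + δ_{i,j−1}) (indices mod 2n+1). Then the smallest eigenvalue 1 + cos(2πn/(2n+1)) of H₀ has multiplicity at least 2 (both p_n and p_{−n} are eigenvectors for it), so the spectral gap of H₀ between its two smallest eigenvalues is zero; yet, with ψ = p_n, for every subset S ⊆ ℤ/(2n+1) with 0 < |S| ≤ n the conductance ratio satisfies (−⟨ψ| 1_S H₀ 1_{S^c} |ψ⟩)/π(S) ≥ |cos(2πn/(2n+1))|/n. -/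
open scoped BigOperators
open Fin.NatCast

/-- The hopping Hamiltonian of a single particle on a ring with `2n+1` sites:
`(H₀)_{ij} = δ_{ij} + (1/2)(δ_{i,j+1} + δ_{i,j-1})`, indices mod `2n+1`. -/
noncomputable def ringH (n : ℕ) : Matrix (ZMod (2 * n + 1)) (ZMod (2 * n + 1)) ℂ :=
  fun i j => (if i = j then 1 else 0) +
    (1 / 2) * ((if i = j + 1 then 1 else 0) + (if i = j - 1 then 1 else 0))

/-- The momentum eigenstate `p_k`, with components
`(p_k)_j = exp(2πi·jk/(2n+1))/√(2n+1)`. -/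
noncomputable def pvec (n : ℕ) (k : ℤ) : ZMod (2 * n + 1) → ℂ :=
  fun j => Complex.exp (2 * Real.pi * Complex.I * (j.val : ℂ) * (k : ℂ) / (2 * n + 1)) /
    (Real.sqrt (2 * n + 1) : ℂ)

/-!
The discrete Fourier transform diagonalises `H₀`: the column `j ↦ χ (j k)` of the DFT matrix,
`χ` the standard additive character of `ZMod (2n+1)`, is an eigenvector with eigenvalue
`1 + Re χ k = 1 + cos (2πk/(2n+1))`. Hence these are the eigenvalues of `H₀`, counted with
multiplicity; the smallest is attained at `k = n` and at `k = -n`, so it is a double eigenvalue.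

For the conductance, `|p_n|²` is uniform and `conj (p_n x) * p_n (x ± 1)` has real part
`cos (2πn/(2n+1)) / (2n+1) < 0`. A nonempty proper subset `S` of the ring has a point leaving it in
each direction, so at least two boundary edges, and the ratio is at least `|cos| / |S|`.
-/

open Matrix Polynomial Finset ComplexConjugate

lemma Matrix.charpoly_eq_prod_of_mul_eq_mul_diagonal {n R : Type*} [Fintype n] [DecidableEq n]
    [CommRing R] {A F G : Matrix n n R} {d : n → R} (hGF : G * F = 1)
    (hAF : A * F = F * diagonal d) : A.charpoly = ∏ i, (X - C (d i)) := by
  have hFG : F * G = 1 := mul_eq_one_comm.1 hGF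
  calc A.charpoly = (F * (diagonal d * G)).charpoly := by
        rw [← Matrix.mul_assoc, ← hAF, Matrix.mul_assoc, hFG, Matrix.mul_one]
    _ = (diagonal d * (G * F)).charpoly := by rw [charpoly_mul_comm, Matrix.mul_assoc]
    _ = ∏ i, (X - C (d i)) := by rw [hGF, Matrix.mul_one, charpoly_diagonal]

lemma Matrix.IsHermitian.map_eigenvalues_eq_of_charpoly_eq {𝕜 n : Type*} [RCLike 𝕜] [Fintype n]
    [DecidableEq n] {A : Matrix n n 𝕜} (hA : A.IsHermitian) {c : n → ℝ}
    (h : A.charpoly = ∏ i, (X - C (c i : 𝕜))) :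
    univ.val.map hA.eigenvalues = univ.val.map c := by
  have hroots := hA.roots_charpoly_eq_eigenvalues
  rw [h, roots_prod _ _ (by simp [prod_ne_zero_iff, X_sub_C_ne_zero])] at hroots
  apply Multiset.map_injective (RCLike.ofReal_injective (K := 𝕜))
  simpa [Multiset.map_map] using hroots.symm

lemma Monotone.apply_zero_eq_apply_one_eq_of_equiv {ι : Type*} [Fintype ι] {N : ℕ} [NeZero N]
    {E : ℕ → ℝ} (hE : Monotone E) {f : ι → ℝ} (σ : Fin N ≃ ι) (hσ : ∀ k : ℕ, E k = f (σ k)) {μ : ℝ}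
    (hμ : ∀ i, μ ≤ f i) (htwo : 1 < #{i | f i = μ}) : E 0 = μ ∧ E 1 = μ := by
  obtain ⟨i, hi, j, hj, hij⟩ := one_lt_card.1 htwo
  have hEσ (a : Fin N) : E a = f (σ a) := by rw [hσ, Fin.cast_val_eq_self]
  have hE1 : E 1 ≤ μ := by
    rcases Nat.eq_zero_or_pos (σ.symm i) with h | h
    · have hj1 : 1 ≤ ((σ.symm j : Fin N) : ℕ) := by
        refine Nat.one_le_iff_ne_zero.2 fun h' => hij ?_
        rw [← σ.apply_symm_apply i, ← σ.apply_symm_apply j, Fin.ext (h.trans h'.symm)]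
      calc E 1 ≤ E (σ.symm j) := hE hj1
        _ = μ := by rw [hEσ, σ.apply_symm_apply, (mem_filter.1 hj).2]
    · calc E 1 ≤ E (σ.symm i) := hE h
        _ = μ := by rw [hEσ, σ.apply_symm_apply, (mem_filter.1 hi).2]
  have hE0 : μ ≤ E 0 := hσ 0 ▸ hμ _
  have h01 : E 0 ≤ E 1 := hE zero_le_one
  exact ⟨by linarith, by linarith⟩

lemma card_filter_eq_count_map {ι α : Type*} [Fintype ι] [DecidableEq α] (f : ι → α) (a : α) :
    #{i | f i = a} = (univ.val.map f).count a := by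
  rw [Multiset.count_map, card_def, filter_val]
  simp_rw [eq_comm]

namespace ZMod
variable {N : ℕ} [NeZero N]

lemma re_stdAddChar_intCast (j : ℤ) :
    (stdAddChar (j : ZMod N)).re = Real.cos (2 * Real.pi * j / N) := by
  rw [stdAddChar_coe, ← Complex.exp_ofReal_mul_I_re (2 * Real.pi * j / N)]
  congr 2
  push_cast
  ring

lemma conj_stdAddChar (a : ZMod N) : conj (stdAddChar a) = stdAddChar (-a) := by
  rw [stdAddChar_apply, stdAddChar_apply, AddChar.map_neg_eq_inv, Circle.coe_inv_eq_conj]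

lemma re_stdAddChar_neg (a : ZMod N) : (stdAddChar (-a)).re = (stdAddChar a).re := by
  rw [← conj_stdAddChar, Complex.conj_re]

lemma norm_stdAddChar (a : ZMod N) : ‖stdAddChar a‖ = 1 := Circle.norm_coe _

variable (N) in
noncomputable def fourierMatrix : Matrix (ZMod N) (ZMod N) ℂ := of fun j k => stdAddChar (j * k)

lemma inv_smul_conjTranspose_fourierMatrix_mul :
    (N : ℂ)⁻¹ • (fourierMatrix N)ᴴ * fourierMatrix N = 1 := by
  ext k l
  have hsum : ∑ j, conj (stdAddChar (j * k)) * stdAddChar (j * l) =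
      ∑ j, stdAddChar (j * (l - k)) :=
    sum_congr rfl fun j _ => by rw [conj_stdAddChar, ← AddChar.map_add_eq_mul]; ring_nf
  rw [Matrix.smul_mul, Matrix.smul_apply, Matrix.mul_apply]
  simp only [conjTranspose_apply, fourierMatrix, of_apply, RCLike.star_def]
  rw [hsum, AddChar.sum_mulShift _ (isPrimitive_stdAddChar N), one_apply, card,
    smul_eq_mul]
  by_cases h : k = l
  · simp [h, NeZero.ne]
  · simp [h, sub_eq_zero, Ne.symm h]

lemma exists_mem_add_not_mem {S : Finset (ZMod N)} (hS : S.Nonempty) (hSu : S ≠ univ)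
    {d : ZMod N} (hd : IsUnit d) : ∃ x ∈ S, x + d ∉ S := by
  by_contra! hclosed
  obtain ⟨a, ha⟩ := hS
  have hmul (k : ℕ) : a + k * d ∈ S := by
    induction k with
    | zero => simpa using ha
    | succ k ih => simpa [add_mul, ← add_assoc] using hclosed _ ih
  refine hSu (eq_univ_of_forall fun y => ?_)
  simpa [mul_assoc] using hmul ((y - a) * ↑hd.unit⁻¹).val

end ZMod

lemma cos_two_pi_mul_div_le (n m : ℕ) (hm : m < 2 * n + 1) :
    Real.cos (2 * Real.pi * n / (2 * n + 1)) ≤ Real.cos (2 * Real.pi * m / (2 * n + 1)) := by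
  have hN : (0 : ℝ) < 2 * n + 1 := by positivity
  have of_le (m : ℕ) (hm : m ≤ n) :
      Real.cos (2 * Real.pi * n / (2 * n + 1)) ≤ Real.cos (2 * Real.pi * m / (2 * n + 1)) := by
    apply Real.cos_le_cos_of_nonneg_of_le_pi (by positivity)
    · rw [div_le_iff₀ hN]; nlinarith [Real.pi_pos]
    · gcongr
  rcases le_or_gt m n with h | h
  · exact of_le m h
  · have hsymm : Real.cos (2 * Real.pi * m / (2 * n + 1)) =
        Real.cos (2 * Real.pi * (2 * n + 1 - m : ℕ) / (2 * n + 1)) := by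
      rw [Nat.cast_sub hm.le, ← Real.cos_two_pi_sub]
      congr 1
      field_simp
      push_cast
      ring
    exact hsymm ▸ of_le _ (by omega)

lemma cos_two_pi_mul_div_neg {n : ℕ} (hn : 1 ≤ n) :
    Real.cos (2 * Real.pi * n / (2 * n + 1)) < 0 := by
  have hN : (0 : ℝ) < 2 * n + 1 := by positivity
  have hn' : (1 : ℝ) ≤ n := by exact_mod_cast hn
  apply Real.cos_neg_of_pi_div_two_lt_of_lt
  · rw [lt_div_iff₀ hN]; nlinarith [Real.pi_pos]
  · rw [div_lt_iff₀ hN]; nlinarith [Real.pi_pos]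

open ZMod

section Ring
variable (n : ℕ)

lemma ringH_apply (i j : ZMod (2 * n + 1)) :
    ringH n i j = (if j = i then 1 else 0) +
      1 / 2 * ((if j = i - 1 then 1 else 0) + (if j = i + 1 then 1 else 0)) := by
  simp only [ringH, eq_comm (a := i), eq_sub_iff_add_eq, sub_eq_iff_eq_add]

lemma sum_ringH_mul (T : Finset (ZMod (2 * n + 1))) (g : ZMod (2 * n + 1) → ℂ)
    (i : ZMod (2 * n + 1)) :
    ∑ j ∈ T, ringH n i j * g j = (if i ∈ T then g i else 0) +
      1 / 2 * ((if i - 1 ∈ T then g (i - 1) else 0) + (if i + 1 ∈ T then g (i + 1) else 0)) := by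
  simp only [ringH_apply, add_mul, mul_add, ite_mul, one_mul, zero_mul, mul_assoc,
    sum_add_distrib, ← mul_sum, sum_ite_eq']

lemma ringH_mulVec_apply (v : ZMod (2 * n + 1) → ℂ) (i : ZMod (2 * n + 1)) :
    (ringH n *ᵥ v) i = v i + 1 / 2 * (v (i - 1) + v (i + 1)) := by
  simpa [mulVec, dotProduct] using sum_ringH_mul n univ v i

lemma ringH_mulVec_stdAddChar (k : ZMod (2 * n + 1)) :
    ringH n *ᵥ (fun j => stdAddChar (j * k)) =
      ((1 + (stdAddChar k).re : ℝ) : ℂ) • fun j => stdAddChar (j * k) := by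
  ext i
  have hsucc : stdAddChar ((i + 1) * k) = stdAddChar (i * k) * stdAddChar k := by
    rw [← AddChar.map_add_eq_mul]; ring_nf
  have hpred : stdAddChar ((i - 1) * k) = stdAddChar (i * k) * conj (stdAddChar k) := by
    rw [conj_stdAddChar, ← AddChar.map_add_eq_mul]; ring_nf
  rw [ringH_mulVec_apply, hsucc, hpred, Pi.smul_apply, smul_eq_mul]
  push_cast
  rw [Complex.re_eq_add_conj]
  ring

lemma ringH_mul_fourierMatrix :
    ringH n * fourierMatrix (2 * n + 1) =
      fourierMatrix (2 * n + 1) * diagonal fun k => ((1 + (stdAddChar k).re : ℝ) : ℂ) := by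
  ext j k
  rw [mul_diagonal, mul_comm (fourierMatrix _ j k)]
  exact congrFun (ringH_mulVec_stdAddChar n k) j

lemma map_eigenvalues_ringH (hH : (ringH n).IsHermitian) :
    univ.val.map hH.eigenvalues =
      univ.val.map fun k : ZMod (2 * n + 1) => 1 + (stdAddChar k).re :=
  hH.map_eigenvalues_eq_of_charpoly_eq <| charpoly_eq_prod_of_mul_eq_mul_diagonal
    inv_smul_conjTranspose_fourierMatrix_mul (ringH_mul_fourierMatrix n)

lemma le_eigenvalues_ringH (hH : (ringH n).IsHermitian) (i : ZMod (2 * n + 1)) :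
    1 + Real.cos (2 * Real.pi * n / (2 * n + 1)) ≤ hH.eigenvalues i := by
  obtain ⟨k, -, hk⟩ := Multiset.mem_map.1 (map_eigenvalues_ringH n hH ▸
    Multiset.mem_map_of_mem hH.eigenvalues (mem_univ i))
  rw [← hk, ← natCast_zmod_val k, ← Int.cast_natCast (R := ZMod (2 * n + 1)),
    re_stdAddChar_intCast]
  push_cast
  gcongr 1 + ?_
  exact cos_two_pi_mul_div_le n _ (val_lt k)

lemma one_lt_card_eigenvalues_ringH_eq (hn : 1 ≤ n) (hH : (ringH n).IsHermitian) :
    1 < #{i | hH.eigenvalues i = 1 + Real.cos (2 * Real.pi * n / (2 * n + 1))} := by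
  rw [card_filter_eq_count_map, map_eigenvalues_ringH n hH, ← card_filter_eq_count_map]
  have hre :
      (stdAddChar (n : ZMod (2 * n + 1))).re = Real.cos (2 * Real.pi * n / (2 * n + 1)) := by
    rw [← Int.cast_natCast (R := ZMod (2 * n + 1)), re_stdAddChar_intCast]; push_cast; rfl
  have hne : (n : ZMod (2 * n + 1)) ≠ -n := by
    rw [Ne, eq_neg_iff_add_eq_zero, ← Nat.cast_add, natCast_eq_zero_iff]
    exact fun h => by have := Nat.le_of_dvd (by omega) h; omega
  refine one_lt_card.2 ⟨n, ?_, -n, ?_, hne⟩ <;> simp [hre, re_stdAddChar_neg]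

end Ring

section Momentum
variable (n : ℕ)

lemma pvec_eq_smul (k : ℤ) :
    pvec n k =
      ((√(2 * n + 1) : ℝ) : ℂ)⁻¹ • fun j => stdAddChar (j * (k : ZMod (2 * n + 1))) := by
  ext j
  have hcast : (((j.val : ℤ) * k : ℤ) : ZMod (2 * n + 1)) = j * k := by
    push_cast [natCast_zmod_val]; rfl
  rw [Pi.smul_apply, smul_eq_mul, ← hcast, stdAddChar_coe, pvec, inv_mul_eq_div]
  push_cast
  ring_nf

lemma ringH_mulVec_pvec (k : ℤ) :
    ringH n *ᵥ pvec n k =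
      ((1 + Real.cos (2 * Real.pi * k / (2 * n + 1)) : ℝ) : ℂ) • pvec n k := by
  rw [pvec_eq_smul, mulVec_smul, ringH_mulVec_stdAddChar, smul_comm, re_stdAddChar_intCast]
  push_cast
  rfl

lemma conj_pvec_mul_pvec (k : ℤ) (x y : ZMod (2 * n + 1)) :
    conj (pvec n k x) * pvec n k y =
      stdAddChar ((y - x) * (k : ZMod (2 * n + 1))) / (2 * n + 1) := by
  have hsqrt : ((√(2 * n + 1) : ℝ) : ℂ) * ((√(2 * n + 1) : ℝ) : ℂ) = 2 * n + 1 := by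
    rw [← Complex.ofReal_mul, Real.mul_self_sqrt (by positivity)]
    push_cast; rfl
  rw [pvec_eq_smul, Pi.smul_apply, Pi.smul_apply, smul_eq_mul, smul_eq_mul, map_mul, map_inv₀,
    Complex.conj_ofReal, conj_stdAddChar, ← hsqrt]
  rw [sub_mul, sub_eq_neg_add, AddChar.map_add_eq_mul]
  field_simp

lemma norm_pvec_sq (k : ℤ) (x : ZMod (2 * n + 1)) : ‖pvec n k x‖ ^ 2 = 1 / (2 * n + 1) := by
  rw [pvec_eq_smul, Pi.smul_apply, smul_eq_mul, norm_mul, norm_stdAddChar, mul_one, norm_inv,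
    Complex.norm_real, Real.norm_of_nonneg (Real.sqrt_nonneg _), inv_pow,
    Real.sq_sqrt (by positivity), one_div]

lemma re_sum_conj_pvec_mul_ringH_mul_pvec (k : ℤ) (S : Finset (ZMod (2 * n + 1))) :
    (∑ x ∈ S, ∑ y ∈ Sᶜ, conj (pvec n k x) * ringH n x y * pvec n k y).re =
      Real.cos (2 * Real.pi * k / (2 * n + 1)) / (2 * (2 * n + 1)) *
        (#{x ∈ S | x - 1 ∉ S} + #{x ∈ S | x + 1 ∉ S}) := by
  set c := Real.cos (2 * Real.pi * k / (2 * n + 1))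
  have hre (x y : ZMod (2 * n + 1)) (hxy : y - x = 1 ∨ y - x = -1) :
      (conj (pvec n k x) * pvec n k y).re = c / (2 * n + 1) := by
    have : (stdAddChar ((y - x) * (k : ZMod (2 * n + 1)))).re = c := by
      rcases hxy with h | h <;> rw [h]
      · rw [one_mul, re_stdAddChar_intCast]; push_cast; rfl
      · rw [neg_one_mul, re_stdAddChar_neg, re_stdAddChar_intCast]; push_cast; rfl
    rw [conj_pvec_mul_pvec, show (2 * n + 1 : ℂ) = ((2 * n + 1 : ℝ) : ℂ) by push_cast; rfl,
      Complex.div_ofReal_re, this]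
  have hrow (x : ZMod (2 * n + 1)) (hx : x ∈ S) :
      (∑ y ∈ Sᶜ, conj (pvec n k x) * ringH n x y * pvec n k y).re =
        c / (2 * (2 * n + 1)) *
          ((if x - 1 ∉ S then 1 else 0) + (if x + 1 ∉ S then 1 else 0)) := by
    simp_rw [mul_comm (conj (pvec n k x)), mul_assoc]
    rw [sum_ringH_mul, if_neg (notMem_compl.2 hx)]
    have hpred := hre x (x - 1) (Or.inr (by ring))
    have hsucc := hre x (x + 1) (Or.inl (by ring))
    rw [zero_add, show (1 / 2 : ℂ) = ((1 / 2 : ℝ) : ℂ) by norm_num, Complex.re_ofReal_mul,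
      Complex.add_re]
    simp only [mem_compl, apply_ite Complex.re, Complex.zero_re, hpred, hsucc]
    split_ifs <;> field_simp <;> ring
  rw [Complex.re_sum, sum_congr rfl hrow, ← mul_sum, sum_add_distrib, sum_boole, sum_boole]

lemma conductance_pvec_le (hn : 1 ≤ n) (S : Finset (ZMod (2 * n + 1))) (hS₀ : 0 < #S)
    (hSn : #S ≤ n) :
    |Real.cos (2 * Real.pi * n / (2 * n + 1))| / n ≤
      (-(∑ x ∈ S, ∑ y ∈ Sᶜ, conj (pvec n n x) * ringH n x y * pvec n n y).re) /
        (∑ z ∈ S, ‖pvec n n z‖ ^ 2) := by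
  set c := Real.cos (2 * Real.pi * n / (2 * n + 1))
  have hc : c < 0 := cos_two_pi_mul_div_neg hn
  have hc' : 0 ≤ -c := by linarith
  have hSu : S ≠ univ := fun h => by
    have := card_univ (α := ZMod (2 * n + 1)); rw [ZMod.card, ← h] at this; omega
  have hboundary {d : ZMod (2 * n + 1)} (hd : IsUnit d) :
      (1 : ℝ) ≤ #{x ∈ S | x + d ∉ S} := by
    obtain ⟨x, hx, hxd⟩ := exists_mem_add_not_mem (card_pos.1 hS₀) hSu hd
    exact_mod_cast card_pos.2 ⟨x, mem_filter.2 ⟨hx, hxd⟩⟩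
  have hpred : (1 : ℝ) ≤ #{x ∈ S | x - 1 ∉ S} := by
    simpa only [← sub_eq_add_neg] using hboundary isUnit_one.neg
  have hsucc : (1 : ℝ) ≤ #{x ∈ S | x + 1 ∉ S} := hboundary isUnit_one
  have hden : ∑ z ∈ S, ‖pvec n n z‖ ^ 2 = #S / (2 * n + 1) := by
    rw [sum_congr rfl fun z _ => norm_pvec_sq n n z, sum_const, nsmul_eq_mul, mul_one_div]
  have hS : (0 : ℝ) < #S := by exact_mod_cast hS₀
  have hSn' : (#S : ℝ) ≤ n := by exact_mod_cast hSn
  rw [re_sum_conj_pvec_mul_ringH_mul_pvec, Int.cast_natCast, hden, abs_of_neg hc]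
  calc -c / n ≤ -c / #S := div_le_div_of_nonneg_left hc' hS hSn'
    _ = -c * (1 + 1) / (2 * #S) := by field_simp; ring
    _ ≤ -c * (#{x ∈ S | x - 1 ∉ S} + #{x ∈ S | x + 1 ∉ S}) / (2 * #S) := by gcongr
    _ = _ := by field_simp; rfl

end Momentum

/-- The counterexample of Section 6: the smallest eigenvalue `1 + cos(2πn/(2n+1))` of
`H₀` has multiplicity at least two (both `p_n` and `p_{-n}` are eigenvectors for it), so
the spectral gap is zero, yet every `S` with `0 < |S| ≤ n` has conductance ratio at
least `|cos(2πn/(2n+1))|/n` for `ψ = p_n`. -/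
theorem stmt_18 (n : ℕ) (hn : 1 ≤ n) (hH : (ringH n).IsHermitian) :
    -- `p_n` and `p_{-n}` are both eigenvectors with eigenvalue `1 + cos(2πn/(2n+1))`:
    (ringH n).mulVec (pvec n n) =
      ((1 + Real.cos (2 * Real.pi * (n : ℝ) / (2 * n + 1)) : ℝ) : ℂ) • pvec n n ∧
    (ringH n).mulVec (pvec n (-n)) =
      ((1 + Real.cos (2 * Real.pi * (n : ℝ) / (2 * n + 1)) : ℝ) : ℂ) • pvec n (-n) ∧
    -- the two smallest eigenvalues both equal it, so the spectral gap is zero: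
    (∀ E : ℕ → ℝ, Monotone E →
      (∃ σ : Fin (Fintype.card (ZMod (2 * n + 1))) ≃ ZMod (2 * n + 1),
        ∀ i, E i = hH.eigenvalues (σ i)) →
      E 0 = 1 + Real.cos (2 * Real.pi * (n : ℝ) / (2 * n + 1)) ∧
      E 1 = 1 + Real.cos (2 * Real.pi * (n : ℝ) / (2 * n + 1))) ∧
    -- yet the conductance of every small set is at least `|cos(2πn/(2n+1))|/n`:
    (∀ S : Finset (ZMod (2 * n + 1)), 0 < S.card → S.card ≤ n →
      |Real.cos (2 * Real.pi * (n : ℝ) / (2 * n + 1))| / n ≤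
        (-(∑ x ∈ S, ∑ y ∈ Sᶜ, (starRingEnd ℂ) (pvec n n x) * ringH n x y * pvec n n y).re) /
          (∑ z ∈ S, ‖pvec n n z‖ ^ 2)) := by
  refine ⟨?_, ?_, fun E hE ⟨σ, hσ⟩ => ?_, conductance_pvec_le n hn⟩
  · simpa using ringH_mulVec_pvec n n
  · simpa [mul_neg, neg_div] using ringH_mulVec_pvec n (-n)
  · exact hE.apply_zero_eq_apply_one_eq_of_equiv σ hσ (le_eigenvalues_ringH n hH)
      (one_lt_card_eigenvalues_ringH_eq n hn hH)
end

section
/- Suppose H is stoquastic in the basis B, positive semidefinite with ‖H‖ > E₀, and its ground state ψ has strictly positive entries (ψ_x > 0 for all x ∈ B). Define P_{xy} := (ψ_y/ψ_x)·(‖H‖δ_{xy} − H_{xy})/(‖H‖ − E₀). Then P is a row-stochastic matrix: P_{xy} ≥ 0 for all x, y ∈ B and ∑_{y∈B} P_{xy} = 1 for every x ∈ B; moreover it satisfies detailed balance with respect to π_x := ψ_x², i.e. π_x P_{xy} = π_y P_{yx} for all x, y. -/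
open scoped BigOperators ComplexOrder

/-- The ℓ²-operator norm of a matrix over ℂ. -/
noncomputable def opNorm {B : Type*} [Fintype B] [DecidableEq B] (H : Matrix B B ℂ) : ℝ :=
  ‖Matrix.toEuclideanCLM (𝕜 := ℂ) H‖

/-- The ground-state probability measure of a subset `S`. -/
noncomputable def piS {B : Type*} (ψ : B → ℂ) (S : Finset B) : ℝ :=
  ∑ z ∈ S, ‖ψ z‖ ^ 2

open scoped Classical in
/-- The interior boundary `∂S` of the set `S` with respect to the matrix `H`. -/
noncomputable def bdry {B : Type*} [Fintype B] (H : Matrix B B ℂ) (S : Finset B) : Finset B :=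
  S.filter (fun x => ∃ y ∉ S, H x y ≠ 0)

/-!
`P` is `D⁻¹ (‖H‖ - H) D / (‖H‖ - E₀)` with `D = diag ψ`. Its rows sum to one because
`Hψ = E₀ψ`; its entries are nonnegative because `H` is stoquastic and every entry of `H` is
bounded by `‖H‖`. Detailed balance holds because
`ψ_x² P_{xy} = ψ_x ψ_y (‖H‖δ_{xy} - Re H_{xy}) / (‖H‖ - E₀)` is symmetric in `x, y`,
`Re H` being symmetric for Hermitian `H`.
-/

open scoped Matrix

noncomputable def groundStateTransform {B : Type*} [DecidableEq B] (A : Matrix B B ℝ)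
    (ψ : B → ℝ) (c E : ℝ) : Matrix B B ℝ :=
  fun x y => ψ y / ψ x * ((c * (if x = y then 1 else 0) - A x y) / (c - E))

section GroundStateTransform

variable {B : Type*} [DecidableEq B] {A : Matrix B B ℝ} {ψ : B → ℝ} {c E : ℝ}

lemma groundStateTransform_nonneg (hψ : ∀ x, 0 ≤ ψ x) (hdiag : ∀ x, A x x ≤ c)
    (hoff : ∀ x y, x ≠ y → A x y ≤ 0) (hE : E ≤ c) (x y : B) :
    0 ≤ groundStateTransform A ψ c E x y := by
  refine mul_nonneg (div_nonneg (hψ y) (hψ x)) (div_nonneg ?_ (sub_nonneg.mpr hE))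
  by_cases hxy : x = y
  · subst hxy
    simpa using hdiag x
  · simpa [hxy] using hoff x y hxy

lemma sum_groundStateTransform [Fintype B] (hψ : ∀ x, ψ x ≠ 0) (hE : E ≠ c)
    (hA : A *ᵥ ψ = E • ψ) (x : B) :
    ∑ y, groundStateTransform A ψ c E x y = 1 := by
  have hrow : ∑ y, A x y * ψ y = E * ψ x := congrFun hA x
  have hcE : c - E ≠ 0 := sub_ne_zero.mpr hE.symm
  calc ∑ y, groundStateTransform A ψ c E x y
      = (∑ y, (c * (if x = y then ψ y else 0) - A x y * ψ y)) / (ψ x * (c - E)) := by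
        rw [Finset.sum_div]
        refine Finset.sum_congr rfl fun y _ => ?_
        rw [groundStateTransform, div_mul_div_comm]
        congr 1
        split_ifs <;> ring
    _ = 1 := by
        rw [Finset.sum_sub_distrib, ← Finset.mul_sum, Finset.sum_ite_eq,
          if_pos (Finset.mem_univ x), hrow, ← sub_mul, mul_comm]
        exact div_self (mul_ne_zero (hψ x) hcE)

lemma groundStateTransform_detailed_balance (hA : A.IsSymm) (x y : B) :
    ψ x ^ 2 * groundStateTransform A ψ c E x y =
      ψ y ^ 2 * groundStateTransform A ψ c E y x := by
  have hsq (a b : ℝ) : a ^ 2 * (b / a) = a * b := by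
    rcases eq_or_ne a 0 with rfl | ha
    · simp
    · field_simp
  by_cases hxy : x = y
  · rw [hxy]
  · simp only [groundStateTransform, if_neg hxy, if_neg (Ne.symm hxy), hA.apply y x, ← mul_assoc,
      hsq, mul_comm (ψ x)]

end GroundStateTransform

lemma norm_apply_le_opNorm {B : Type*} [Fintype B] [DecidableEq B] (H : Matrix B B ℂ) (x y : B) :
    ‖H x y‖ ≤ opNorm H :=
  calc ‖H x y‖
        = ‖Matrix.toEuclideanCLM (𝕜 := ℂ) H (WithLp.toLp 2 (Pi.single y 1)) x‖ := by
        simp [Matrix.mulVec_single]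
    _ ≤ ‖Matrix.toEuclideanCLM (𝕜 := ℂ) H (WithLp.toLp 2 (Pi.single y 1))‖ :=
        PiLp.norm_apply_le _ _
    _ ≤ opNorm H := by
        grw [ContinuousLinearMap.le_opNorm]
        simp [opNorm]

lemma Matrix.IsHermitian.isSymm_map_re {B : Type*} {H : Matrix B B ℂ} (hH : H.IsHermitian) :
    (H.map Complex.re).IsSymm := by
  ext x y
  simp [← hH.apply x y]

lemma map_re_mulVec_of_mulVec_ofReal {B : Type*} [Fintype B] {H : Matrix B B ℂ} {ψ : B → ℝ}
    {E : ℝ} (h : H *ᵥ (fun x => (ψ x : ℂ)) = (E : ℂ) • fun x => (ψ x : ℂ)) :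
    H.map Complex.re *ᵥ ψ = E • ψ := by
  ext x
  simpa [Matrix.mulVec, dotProduct, Complex.re_sum] using congrArg Complex.re (congrFun h x)

theorem stmt_19_general {B : Type*} [Fintype B] [DecidableEq B]
    (H : Matrix B B ℂ) (hH : H.IsHermitian)
    -- `H` is stoquastic in the basis `B`: real entries, non-positive off the diagonal:
    (hstoq : ∀ z z', z ≠ z' → (H z z').re ≤ 0)
    -- `ψ` is the strictly positive unit-norm ground state, `E₀` the smallest eigenvalue:
    (E₀ : ℝ)
    (hgap : E₀ < opNorm H)
    (ψ : B → ℝ) (hpos : ∀ x, 0 < ψ x)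
    (hground : H.mulVec (fun x => (ψ x : ℂ)) = (E₀ : ℂ) • fun x => (ψ x : ℂ))
    (P : Matrix B B ℝ)
    (hP : P = fun x y =>
      ψ y / ψ x * ((opNorm H * (if x = y then 1 else 0) - (H x y).re) / (opNorm H - E₀))) :
    (∀ x y, 0 ≤ P x y) ∧
    (∀ x, ∑ y, P x y = 1) ∧
    (∀ x y, ψ x ^ 2 * P x y = ψ y ^ 2 * P y x) := by
  replace hP : P = groundStateTransform (H.map Complex.re) ψ (opNorm H) E₀ := hP
  subst hP
  refine ⟨groundStateTransform_nonneg (fun x => (hpos x).le)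
      (fun x => (Complex.re_le_norm _).trans (norm_apply_le_opNorm H x x)) hstoq hgap.le,
    sum_groundStateTransform (fun x => (hpos x).ne') hgap.ne
      (map_re_mulVec_of_mulVec_ofReal hground),
    groundStateTransform_detailed_balance hH.isSymm_map_re⟩

/-- For a stoquastic `H` with strictly positive ground state `ψ`, the matrix
`P_{xy} := (ψ_y/ψ_x)(‖H‖δ_{xy} - H_{xy})/(‖H‖-E₀)` is row-stochastic and satisfies
detailed balance with respect to `π_x := ψ_x²`. -/
theorem stmt_19 {B : Type*} [Fintype B] [DecidableEq B]
    (H : Matrix B B ℂ) (hH : H.IsHermitian) (hPSD : H.PosSemidef)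
    -- `H` is stoquastic in the basis `B`: real entries, non-positive off the diagonal:
    (hreal : ∀ z z', (H z z').im = 0)
    (hstoq : ∀ z z', z ≠ z' → (H z z').re ≤ 0)
    -- `ψ` is the strictly positive unit-norm ground state, `E₀` the smallest eigenvalue:
    (E₀ : ℝ) (hleast : ∀ i, E₀ ≤ hH.eigenvalues i)
    (hgap : E₀ < opNorm H)
    (ψ : B → ℝ) (hpos : ∀ x, 0 < ψ x) (hψnorm : ∑ z, ψ z ^ 2 = 1)
    (hground : H.mulVec (fun x => (ψ x : ℂ)) = (E₀ : ℂ) • fun x => (ψ x : ℂ))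
    (P : Matrix B B ℝ)
    (hP : P = fun x y =>
      ψ y / ψ x * ((opNorm H * (if x = y then 1 else 0) - (H x y).re) / (opNorm H - E₀))) :
    (∀ x y, 0 ≤ P x y) ∧
    (∀ x, ∑ y, P x y = 1) ∧
    (∀ x y, ψ x ^ 2 * P x y = ψ y ^ 2 * P y x) :=
  stmt_19_general H hH hstoq E₀ hgap ψ hpos hground P hP
end
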